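/- If W is a finite Coxeter group with longest element w₀, then for every w ∈ W the polynomial N_{w,w₀,w₀} has degree exactly l(w). -/

import Mathlib

open Polynomial

/-- The structure constants of the Iwahori–Hecke algebra: `heckeN T w w' w''` is the
coefficient of `T w''` in `T w * T w'`. -/
noncomputable def heckeN {W H : Type*} [Group W] [Ring H] [Algebra (Polynomial ℤ) H]
    (T : Module.Basis W (Polynomial ℤ) H) (w w' w'' : W) : Polynomial ℤ :=
  T.repr (T w * T w') w''

variable {B W H : Type*} [Group W] {M : CoxeterMatrix B}

/-!
Induct on `l(w)`, writing `w = s w'` with `l(w) = l(w') + 1`, so that `T_w = T_s T_{w'}`.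
Since every simple reflection is a left descent of `w₀`, the quadratic relation (with `q = X`) shows that the
`T_{w₀}`-coefficient of `T_s h` is `(q - 1)` times that of `h` plus the `T_{s w₀}`-coefficient
of `h`; hence `N_{w,w₀,w₀} = (q - 1) N_{w',w₀,w₀} + N_{w',w₀,s w₀}`. Left multiplication by `T_s`
raises the degrees of all coefficients by at most one, so every `N_{w',y,u}` has degree at most
`l(w')`, and the first summand, of degree exactly `l(w)`, dominates.
-/

namespace CoxeterSystem

variable (cs : CoxeterSystem M W)

local prefix:100 "s" => cs.simple
local prefix:100 "ℓ" => cs.length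

theorem ascent_induction {p : W → Prop} (one : p 1)
    (step : ∀ w i, ¬cs.IsLeftDescent w i → p w → p (s i * w)) (w : W) : p w := by
  induction h : ℓ w generalizing w with
  | zero => rwa [cs.length_eq_zero_iff.mp h]
  | succ n ih =>
    obtain ⟨i, hi⟩ := cs.exists_leftDescent_of_ne_one (w := w) (by rintro rfl; simp at h)
    have hlen := cs.isLeftDescent_iff.mp hi
    simpa only [cs.simple_mul_simple_cancel_left] using
      step _ i (cs.isLeftDescent_iff_not_isLeftDescent_mul.mp hi) (ih _ (by omega))

theorem isLeftDescent_of_forall_length_le {w₀ : W} (hw₀ : ∀ u, ℓ u ≤ ℓ w₀) (i : B) :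
    cs.IsLeftDescent w₀ i :=
  (hw₀ _).lt_of_ne (cs.length_simple_mul_ne w₀ i)

theorem simple_mul_eq_iff {v u : W} (i : B) : s i * v = u ↔ v = s i * u := by
  constructor <;> rintro rfl <;> simp [cs.simple_mul_simple_cancel_left]

structure IsHeckeBasis [Ring H] [Algebra ℤ[X] H] (T : Module.Basis W ℤ[X] H) : Prop where
  mul_eq_of_length_add : ∀ y y' : W, ℓ (y * y') = ℓ y + ℓ y' → T y * T y' = T (y * y')
  quadratic : ∀ i : B, (T (s i) + 1) * (T (s i) - algebraMap ℤ[X] H X) = 0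

end CoxeterSystem

namespace CoxeterSystem.IsHeckeBasis

variable {cs : CoxeterSystem M W} [Ring H] [Algebra ℤ[X] H] {T : Module.Basis W ℤ[X] H}

local prefix:100 "s" => cs.simple
local prefix:100 "ℓ" => cs.length

theorem basis_one_mul (hT : cs.IsHeckeBasis T) (y : W) : T 1 * T y = T y := by
  simpa using hT.mul_eq_of_length_add 1 y (by simp)

theorem simple_mul_of_not_isLeftDescent (hT : cs.IsHeckeBasis T) {i : B} {u : W}
    (hu : ¬cs.IsLeftDescent u i) : T (s i) * T u = T (s i * u) :=
  hT.mul_eq_of_length_add _ _ (by rw [cs.not_isLeftDescent_iff.mp hu, cs.length_simple, add_comm])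

theorem simple_mul_self (hT : cs.IsHeckeBasis T) (i : B) :
    T (s i) * T (s i) = (X - 1 : ℤ[X]) • T (s i) + (X : ℤ[X]) • 1 := by
  have h := hT.quadratic i
  rw [add_mul, mul_sub, one_mul, ← Algebra.commutes] at h
  rw [sub_smul, _root_.one_smul, Algebra.smul_def, Algebra.smul_def, mul_one]
  rw [← sub_eq_zero, ← h]
  abel

theorem simple_mul_of_isLeftDescent (hT : cs.IsHeckeBasis T) {i : B} {u : W}
    (hu : cs.IsLeftDescent u i) :
    T (s i) * T u = (X - 1 : ℤ[X]) • T u + (X : ℤ[X]) • T (s i * u) := by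
  have hsu : T (s i) * T (s i * u) = T u := by
    rw [hT.simple_mul_of_not_isLeftDescent (cs.isLeftDescent_iff_not_isLeftDescent_mul.mp hu),
      cs.simple_mul_simple_cancel_left]
  rw [← hsu, ← mul_assoc, hT.simple_mul_self, add_mul, smul_mul_assoc, smul_mul_assoc,
    one_mul, hsu]

theorem repr_simple_mul_of_isLeftDescent (hT : cs.IsHeckeBasis T) {i : B} {u : W}
    (hu : cs.IsLeftDescent u i) (x : H) :
    T.repr (T (s i) * x) u = (X - 1) * T.repr x u + T.repr x (s i * u) := by
  suffices Finsupp.lapply u ∘ₗ T.repr.toLinearMap ∘ₗ LinearMap.mulLeft ℤ[X] (T (s i)) =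
      (X - 1 : ℤ[X]) • (Finsupp.lapply u ∘ₗ T.repr.toLinearMap)
        + Finsupp.lapply (s i * u) ∘ₗ T.repr.toLinearMap from
    LinearMap.congr_fun this x
  classical
  refine T.ext fun v => ?_
  by_cases hv : cs.IsLeftDescent v i
  · have hsv : s i * v ≠ u := by
      rintro rfl
      exact cs.isLeftDescent_iff_not_isLeftDescent_mul.mp hv hu
    have hvsu : v ≠ s i * u := by
      rintro rfl
      exact cs.isLeftDescent_iff_not_isLeftDescent_mul.mp hu hv
    obtain rfl | hvu := eq_or_ne v u <;> simp [hT.simple_mul_of_isLeftDescent hv, *]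
  · have hvu : v ≠ u := by rintro rfl; exact hv hu
    simp [hT.simple_mul_of_not_isLeftDescent hv, Finsupp.single_apply, hvu, cs.simple_mul_eq_iff]

theorem repr_simple_mul_of_not_isLeftDescent (hT : cs.IsHeckeBasis T) {i : B} {u : W}
    (hu : ¬cs.IsLeftDescent u i) (x : H) :
    T.repr (T (s i) * x) u = X * T.repr x (s i * u) := by
  -- Apply the descent case at `s i * u` to `T (s i) * x` and expand `T (s i) ^ 2`.
  have hsu : cs.IsLeftDescent (s i * u) i := by
    rwa [cs.isLeftDescent_iff_not_isLeftDescent_mul, cs.simple_mul_simple_cancel_left]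
  have h := hT.repr_simple_mul_of_isLeftDescent hsu (T (s i) * x)
  rw [← mul_assoc, hT.simple_mul_self, add_mul, smul_mul_assoc, smul_mul_assoc, one_mul,
    map_add, map_smul, map_smul, cs.simple_mul_simple_cancel_left] at h
  simpa using h.symm

theorem heckeN_simple_mul_of_isLeftDescent (hT : cs.IsHeckeBasis T) {i : B} {w u : W}
    (hw : ¬cs.IsLeftDescent w i) (hu : cs.IsLeftDescent u i) (y : W) :
    heckeN T (s i * w) y u = (X - 1) * heckeN T w y u + heckeN T w y (s i * u) := by
  rw [heckeN, ← hT.simple_mul_of_not_isLeftDescent hw, mul_assoc,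
    hT.repr_simple_mul_of_isLeftDescent hu, heckeN, heckeN]

theorem heckeN_simple_mul_of_not_isLeftDescent (hT : cs.IsHeckeBasis T) {i : B} {w u : W}
    (hw : ¬cs.IsLeftDescent w i) (hu : ¬cs.IsLeftDescent u i) (y : W) :
    heckeN T (s i * w) y u = X * heckeN T w y (s i * u) := by
  rw [heckeN, ← hT.simple_mul_of_not_isLeftDescent hw, mul_assoc,
    hT.repr_simple_mul_of_not_isLeftDescent hu, heckeN]

theorem degree_heckeN_le (hT : cs.IsHeckeBasis T) (w y u : W) :
    (heckeN T w y u).degree ≤ ℓ w := by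
  classical
  induction w using cs.ascent_induction generalizing u with
  | one =>
    rw [heckeN, hT.basis_one_mul, T.repr_self, Finsupp.single_apply]
    split_ifs <;> simp
  | step w i hw ih =>
    rw [cs.not_isLeftDescent_iff.mp hw]
    by_cases hu : cs.IsLeftDescent u i
    · rw [hT.heckeN_simple_mul_of_isLeftDescent hw hu]
      compute_degree
      push_cast
      exact max_le (by rw [add_comm]; gcongr; exact ih u)
        ((ih _).trans (WithBot.coe_le_coe.mpr (Nat.le_succ _)))
    · rw [hT.heckeN_simple_mul_of_not_isLeftDescent hw hu]
      compute_degree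
      push_cast
      rw [add_comm]
      gcongr
      exact ih _

end CoxeterSystem.IsHeckeBasis

theorem stmt_2_general (cs : CoxeterSystem M W)
    [Ring H] [Algebra (Polynomial ℤ) H] (T : Module.Basis W (Polynomial ℤ) H)
    (hmul : ∀ y y' : W, cs.length (y * y') = cs.length y + cs.length y' →
      T y * T y' = T (y * y'))
    (hquad : ∀ i : B, (T (cs.simple i) + 1) *
      (T (cs.simple i) - algebraMap (Polynomial ℤ) H X) = 0)
    (w₀ : W) (hw₀ : ∀ u : W, cs.length u ≤ cs.length w₀)
    (w : W) :
    (heckeN T w w₀ w₀).degree = (cs.length w : WithBot ℕ) := by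
  have hT : cs.IsHeckeBasis T := ⟨hmul, hquad⟩
  induction w using cs.ascent_induction with
  | one => simp [heckeN, hT.basis_one_mul]
  | step w i hw ih =>
    rw [hT.heckeN_simple_mul_of_isLeftDescent hw (cs.isLeftDescent_of_forall_length_le hw₀ i),
      cs.not_isLeftDescent_iff.mp hw]
    have hlead : ((X - 1) * heckeN T w w₀ w₀).degree = ↑(cs.length w + 1) := by
      rw [degree_mul, ih, ← C_1, degree_X_sub_C]
      push_cast
      ring
    have hrest : (heckeN T w w₀ (cs.simple i * w₀)).degree < ↑(cs.length w + 1) :=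
      (hT.degree_heckeN_le w w₀ _).trans_lt (WithBot.coe_lt_coe.mpr (Nat.lt_succ_self _))
    rw [degree_add_eq_left_of_degree_lt (hlead ▸ hrest), hlead]

/-- In a finite Coxeter group with longest element `w₀`, the polynomial `N_{w,w₀,w₀}`
has degree exactly `l(w)`. -/
theorem stmt_2 [Fintype W] (cs : CoxeterSystem M W)
    [Ring H] [Algebra (Polynomial ℤ) H] (T : Module.Basis W (Polynomial ℤ) H)
    (hone : T 1 = 1)
    (hmul : ∀ y y' : W, cs.length (y * y') = cs.length y + cs.length y' →
      T y * T y' = T (y * y'))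
    (hquad : ∀ i : B, (T (cs.simple i) + 1) *
      (T (cs.simple i) - algebraMap (Polynomial ℤ) H X) = 0)
    (w₀ : W) (hw₀ : ∀ u : W, cs.length u ≤ cs.length w₀)
    (w : W) :
    (heckeN T w w₀ w₀).degree = (cs.length w : WithBot ℕ) :=
  stmt_2_general cs T hmul hquad w₀ hw₀ w
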